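/- (Main prediction error bound) Let x be a feature vector, M ≥ 1 neighborhoods B(x,r₁),…,B(x,r_M) each containing at least 2 samples of [0,1]-valued residuals, m* the index minimizing the true residual variance Var_m with standard-deviation gap Δ > 0 to the second best, and m̂ the index minimizing the sample variance. Let ĉ be the sample mean of residuals in B(x,r_{m̂}) and c the true residual of the student, distributed with mean μ_{m*} and variance Var_{m*} conditional on the neighborhood B(x,r_{m*}). Assume (i) P[|c − μ_{m*}| ≥ ε/2] ≤ 4Var_{m*}/ε², (ii) for each m the sample mean over B(x,r_m) satisfies the Hoeffding bound, and (iii) each sample standard deviation satisfies the empirical Bernstein bound. Then P[|c − ĉ| ≥ ε] ≤ 4Var_{m*}/ε² + 2·exp(−ε²·min_m |B(x,r_m)|/2) + 2M·exp(−Δ²·min_m (|B(x,r_m)|−1)/8). -/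

import Mathlib

/-!
If the variance-minimizing radius is selected correctly (`m̂ = m*`), then `|c − ĉ| ≥ ε` forces
either the residual to be `ε/2`-far from `μ_{m*}` (Chebyshev) or the sample mean to be
`ε/2`-far from it (Hoeffding). If it is selected wrongly, the gap `Δ` between the true standard
deviations of `m̂` and `m*` cannot be reversed by the sample standard deviations unless one of
them errs by `Δ/2` (empirical Bernstein, with a union bound over the `M` radii).
-/

open MeasureTheory ProbabilityTheory Real

lemma half_le_abs_sub_or_half_le_abs_sub {x y z ε : ℝ} (h : ε ≤ |x - y|) :
    ε / 2 ≤ |x - z| ∨ ε / 2 ≤ |y - z| := by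
  by_contra! hlt
  linarith [abs_sub_le x z y, abs_sub_comm y z]

/-- The misselection bound, Lemma 1 of the paper. -/
lemma half_le_abs_sub_or_of_le_of_le_sub {a b a' b' Δ : ℝ} (hest : a' ≤ b') (hgap : Δ ≤ a - b) :
    Δ / 2 ≤ |a' - a| ∨ Δ / 2 ≤ |b' - b| := by
  by_contra! hlt
  linarith [(abs_lt.mp hlt.1).1, (abs_lt.mp hlt.2).2]

lemma prediction_error_cases {ι : Type*} {c μ ε Δ : ℝ} {mstar mhat : ι} {muhat s shat : ι → ℝ}
    (hsel : shat mhat ≤ shat mstar) (hgap : mhat ≠ mstar → Δ ≤ s mhat - s mstar)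
    (h : ε ≤ |c - muhat mhat|) :
    ε / 2 ≤ |c - μ| ∨ ε / 2 ≤ |muhat mstar - μ| ∨ ∃ m, Δ / 2 ≤ |shat m - s m| := by
  by_cases hm : mhat = mstar
  · subst hm
    rcases half_le_abs_sub_or_half_le_abs_sub (z := μ) h with h | h
    exacts [Or.inl h, Or.inr (Or.inl h)]
  · rcases half_le_abs_sub_or_of_le_of_le_sub hsel (hgap hm) with h | h
    exacts [Or.inr (Or.inr ⟨mhat, h⟩), Or.inr (Or.inr ⟨mstar, h⟩)]

lemma measureReal_iUnion_le_card_mul {α ι : Type*} [MeasurableSpace α] {μ : Measure α}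
    [Fintype ι] {s : ι → Set α} {b : ℝ} (h : ∀ i, μ.real (s i) ≤ b) :
    μ.real (⋃ i, s i) ≤ Fintype.card ι * b := by
  calc μ.real (⋃ i, s i) ≤ ∑ i, μ.real (s i) := measureReal_iUnion_fintype_le s
    _ ≤ ∑ _i : ι, b := Finset.sum_le_sum fun i _ => h i
    _ = Fintype.card ι * b := by simp

lemma exp_neg_mul_le_exp_neg_mul_iInf {ι : Type*} [Finite ι] {a : ℝ} (ha : 0 ≤ a)
    (f : ι → ℝ) (i : ι) : exp (-a * f i) ≤ exp (-a * ⨅ j, f j) := by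
  rw [exp_le_exp, neg_mul, neg_mul, neg_le_neg_iff]
  exact mul_le_mul_of_nonneg_left (ciInf_le (Finite.bddBelow_range f) i) ha

theorem main_prediction_error_bound_general {Ω : Type*} [MeasureSpace Ω]
    [IsProbabilityMeasure (ℙ : Measure Ω)] {M : ℕ}
    (n : Fin M → ℕ)
    (μ : Fin M → ℝ) (V : Fin M → ℝ)
    (mstar : Fin M)
    {Δ : ℝ} (hΔpos : 0 < Δ)
    (hΔ : ∀ m, m ≠ mstar → Δ ≤ Real.sqrt (V m) - Real.sqrt (V mstar))
    (c : Ω → ℝ) (muhat : Fin M → Ω → ℝ) (Vhat : Fin M → Ω → ℝ)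
    (mhat : Ω → Fin M) (hmhat : ∀ ω m, Vhat (mhat ω) ω ≤ Vhat m ω)
    (chat : Ω → ℝ) (hchat : ∀ ω, chat ω = muhat (mhat ω) ω)
    {ε : ℝ}
    (hcheb : (ℙ {ω | ε / 2 ≤ |c ω - μ mstar|}).toReal ≤ 4 * V mstar / ε ^ 2)
    (hhoeff : ∀ m, (ℙ {ω | ε / 2 ≤ |muhat m ω - μ m|}).toReal ≤
      2 * exp (-(ε ^ 2 / 2) * (n m : ℝ)))
    (hbernstein : ∀ m, ∀ t : ℝ, 0 < t →
      (ℙ {ω | t ≤ |Real.sqrt (Vhat m ω) - Real.sqrt (V m)|}).toReal ≤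
        2 * exp (-(((n m : ℝ) - 1) / 2) * t ^ 2)) :
    (ℙ {ω | ε ≤ |c ω - chat ω|}).toReal ≤
      4 * V mstar / ε ^ 2 + 2 * exp (-ε ^ 2 * (⨅ m, (n m : ℝ)) / 2) +
        2 * M * exp (-Δ ^ 2 * (⨅ m, ((n m : ℝ) - 1)) / 8) := by
  set misselected := ⋃ m, {ω | Δ / 2 ≤ |Real.sqrt (Vhat m ω) - Real.sqrt (V m)|}
  have hsub : {ω | ε ≤ |c ω - chat ω|} ⊆ {ω | ε / 2 ≤ |c ω - μ mstar|} ∪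
      {ω | ε / 2 ≤ |muhat mstar ω - μ mstar|} ∪ misselected := fun ω hω => by
    rw [Set.mem_ofPred_eq, hchat] at hω
    rcases prediction_error_cases (μ := μ mstar) (muhat := (muhat · ω))
      (s := fun m => √(V m)) (shat := fun m => √(Vhat m ω)) (sqrt_le_sqrt (hmhat ω mstar))
      (hΔ _) hω with h | h | ⟨m, h⟩
    exacts [Or.inl (Or.inl h), Or.inl (Or.inr h), Or.inr (Set.mem_iUnion.2 ⟨m, h⟩)]
  have hmean : (ℙ {ω | ε / 2 ≤ |muhat mstar ω - μ mstar|}).toReal ≤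
      2 * exp (-ε ^ 2 * (⨅ m, (n m : ℝ)) / 2) := by
    refine (hhoeff mstar).trans ?_
    have := exp_neg_mul_le_exp_neg_mul_iInf (by positivity : 0 ≤ ε ^ 2 / 2)
      (fun m => (n m : ℝ)) mstar
    rw [show -ε ^ 2 * (⨅ m, (n m : ℝ)) / 2 = -(ε ^ 2 / 2) * ⨅ m, (n m : ℝ) by ring]
    linarith
  have hsel : (ℙ misselected).toReal ≤ M * (2 * exp (-Δ ^ 2 * (⨅ m, ((n m : ℝ) - 1)) / 8)) := by
    refine (measureReal_iUnion_le_card_mul fun m => (hbernstein m _ (by positivity)).trans ?_).trans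
      (by rw [Fintype.card_fin])
    have := exp_neg_mul_le_exp_neg_mul_iInf (by positivity : 0 ≤ Δ ^ 2 / 8)
      (fun m => (n m : ℝ) - 1) m
    rw [show -(((n m : ℝ) - 1) / 2) * (Δ / 2) ^ 2 = -(Δ ^ 2 / 8) * ((n m : ℝ) - 1) by ring,
      show -Δ ^ 2 * (⨅ m, ((n m : ℝ) - 1)) / 8 = -(Δ ^ 2 / 8) * ⨅ m, ((n m : ℝ) - 1) by ring]
    linarith
  calc (ℙ {ω | ε ≤ |c ω - chat ω|}).toReal
      ≤ (ℙ ({ω | ε / 2 ≤ |c ω - μ mstar|} ∪ {ω | ε / 2 ≤ |muhat mstar ω - μ mstar|} ∪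
          misselected)).toReal := measureReal_mono hsub
    _ ≤ (ℙ {ω | ε / 2 ≤ |c ω - μ mstar|}).toReal +
          (ℙ {ω | ε / 2 ≤ |muhat mstar ω - μ mstar|}).toReal + (ℙ misselected).toReal :=
      (measureReal_union_le _ _).trans (add_le_add_left (measureReal_union_le _ _) _)
    _ ≤ _ := by linarith

/-- Main prediction error bound (Theorem of the paper): with `M ≥ 1` neighborhoods of
sizes `nₘ ≥ 2`, true residual means `μₘ` and variances `Vₘ` with unique
standard-deviation minimizer `m*` and gap `Δ > 0`, sample means `μ̂ₘ` satisfying the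
Hoeffding bound, sample variances `V̂ₘ` satisfying the empirical Bernstein bound, `m̂`
the index minimizing the sample variance, and prediction `ĉ ω = μ̂_{m̂ ω} ω`, the true
residual `c` (which satisfies the Chebyshev bound around `μ_{m*}`) is predicted with
`P[|c − ĉ| ≥ ε] ≤ 4 V_{m*}/ε² + 2 exp(−ε² minₘ nₘ / 2) + 2M exp(−Δ² minₘ(nₘ−1)/8)`. -/
theorem main_prediction_error_bound {Ω : Type*} [MeasureSpace Ω]
    [IsProbabilityMeasure (ℙ : Measure Ω)] {M : ℕ} (hM : 1 ≤ M)
    (n : Fin M → ℕ) (hn : ∀ m, 2 ≤ n m)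
    (μ : Fin M → ℝ) (V : Fin M → ℝ) (hV : ∀ m, 0 ≤ V m)
    (mstar : Fin M) (hmin : ∀ m, m ≠ mstar → Real.sqrt (V mstar) < Real.sqrt (V m))
    {Δ : ℝ} (hΔpos : 0 < Δ)
    (hΔ : ∀ m, m ≠ mstar → Δ ≤ Real.sqrt (V m) - Real.sqrt (V mstar))
    (c : Ω → ℝ) (muhat : Fin M → Ω → ℝ) (Vhat : Fin M → Ω → ℝ)
    (mhat : Ω → Fin M) (hmhat : ∀ ω m, Vhat (mhat ω) ω ≤ Vhat m ω)
    (chat : Ω → ℝ) (hchat : ∀ ω, chat ω = muhat (mhat ω) ω)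
    {ε : ℝ} (hε : 0 < ε)
    (hcheb : (ℙ {ω | ε / 2 ≤ |c ω - μ mstar|}).toReal ≤ 4 * V mstar / ε ^ 2)
    (hhoeff : ∀ m, (ℙ {ω | ε / 2 ≤ |muhat m ω - μ m|}).toReal ≤
      2 * exp (-(ε ^ 2 / 2) * (n m : ℝ)))
    (hbernstein : ∀ m, ∀ t : ℝ, 0 < t →
      (ℙ {ω | t ≤ |Real.sqrt (Vhat m ω) - Real.sqrt (V m)|}).toReal ≤
        2 * exp (-(((n m : ℝ) - 1) / 2) * t ^ 2)) :
    (ℙ {ω | ε ≤ |c ω - chat ω|}).toReal ≤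
      4 * V mstar / ε ^ 2 + 2 * exp (-ε ^ 2 * (⨅ m, (n m : ℝ)) / 2) +
        2 * M * exp (-Δ ^ 2 * (⨅ m, ((n m : ℝ) - 1)) / 8) :=
  main_prediction_error_bound_general n μ V mstar hΔpos hΔ c muhat Vhat mhat hmhat chat hchat hcheb
    hhoeff hbernstein
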